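/- Let m = n + k. Let L ∈ ℂ^{m×m} be a proper unitary k-lower Hessenberg matrix, R ∈ ℂ^{m×m} a unitary k-upper Hessenberg matrix, Z ∈ ℂ^{m×k}, and E = [I_k; 0] ∈ ℂ^{m×k}. If Â = L (I + E Z*) R has its last k rows equal to zero, then Â is upper triangular. -/

import Mathlib

open Matrix

def IsKUpperHessenberg {m : ℕ} (k : ℕ) (R : Matrix (Fin m) (Fin m) ℂ) : Prop :=
  ∀ i j : Fin m, (j : ℕ) + k < (i : ℕ) → R i j = 0

def IsKLowerHessenberg {m : ℕ} (k : ℕ) (L : Matrix (Fin m) (Fin m) ℂ) : Prop :=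
  ∀ i j : Fin m, (i : ℕ) + k < (j : ℕ) → L i j = 0

/-
Since `L` is unitary, `Lᴴ Â = (I + E Zᴴ) R`, and this is `k`-upper Hessenberg because `E Zᴴ`
vanishes outside its first `k` rows. Row `i + k` of `Lᴴ Â` only sees rows `b ≥ i` of `Â`, as `L` is
`k`-lower Hessenberg, and its coefficient on row `i` is `conj (L i (i + k)) ≠ 0`. Going up from the
vanishing last `k` rows, the entries of `Â` below the diagonal vanish row by row.
-/

theorem IsKUpperHessenberg.add {m k : ℕ} {A B : Matrix (Fin m) (Fin m) ℂ}
    (hA : IsKUpperHessenberg k A) (hB : IsKUpperHessenberg k B) :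
    IsKUpperHessenberg k (A + B) := fun i j hij => by
  rw [Matrix.add_apply, hA i j hij, hB i j hij, add_zero]

theorem isKUpperHessenberg_mul_of_row_eq_zero {m k : ℕ} {ι : Type*} [Fintype ι]
    {A : Matrix (Fin m) ι ℂ} (B : Matrix ι (Fin m) ℂ) (hA : ∀ i : Fin m, k ≤ (i : ℕ) → A i = 0) :
    IsKUpperHessenberg k (A * B) := fun i j hij => by
  rw [mul_apply, hA i (by omega)]
  simp

theorem conjTranspose_mul_apply_of_isKLowerHessenberg {m k : ℕ} {L A : Matrix (Fin m) (Fin m) ℂ}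
    (hL : IsKLowerHessenberg k L) {i p : Fin m} (hp : (p : ℕ) = i + k) (j : Fin m)
    (hbelow : ∀ b : Fin m, i < b → A b j = 0) :
    (Lᴴ * A) p j = star (L i p) * A i j := by
  rw [mul_apply, Finset.sum_eq_single i, conjTranspose_apply]
  · intro b _ hb
    rcases lt_or_gt_of_ne hb with hlt | hgt
    · rw [conjTranspose_apply, hL b p (by omega), star_zero, zero_mul]
    · rw [hbelow b hgt, mul_zero]
  · simp

theorem upperTriangular_of_isKUpperHessenberg_conjTranspose_mul {m k : ℕ}
    {L A : Matrix (Fin m) (Fin m) ℂ} (hL : IsKLowerHessenberg k L)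
    (hLproper : ∀ i p : Fin m, (p : ℕ) = i + k → L i p ≠ 0)
    (hLA : IsKUpperHessenberg k (Lᴴ * A)) (hlast : ∀ i j : Fin m, m ≤ (i : ℕ) + k → A i j = 0) :
    ∀ i j : Fin m, (j : ℕ) < (i : ℕ) → A i j = 0 := by
  intro i
  induction i using WellFoundedGT.induction with
  | _ i ih =>
    intro j hji
    by_cases hi : m ≤ (i : ℕ) + k
    · exact hlast i j hi
    let p : Fin m := ⟨i + k, by omega⟩
    have hrow := conjTranspose_mul_apply_of_isKLowerHessenberg hL (p := p) rfl j
      fun b hib => ih b hib j (by omega)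
    rw [hLA p j (by simp [p]; omega)] at hrow
    exact (mul_eq_zero.mp hrow.symm).resolve_left (star_ne_zero.mpr (hLproper i p rfl))

/-- If `Â = L (I + E Z*) R` with `L` a proper unitary `k`-lower Hessenberg matrix, `R` a
unitary `k`-upper Hessenberg matrix, `E = [I_k; 0]`, and the last `k` rows of `Â` vanish,
then `Â` is upper triangular. -/
theorem bordered_LFR_identity_is_triangular {n k : ℕ}
    (L R Ahat : Matrix (Fin (n + k)) (Fin (n + k)) ℂ)
    (Z : Matrix (Fin (n + k)) (Fin k) ℂ)
    (hL : L ∈ Matrix.unitaryGroup (Fin (n + k)) ℂ)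
    (hLHess : IsKLowerHessenberg k L)
    (hLproper : ∀ (j : ℕ) (h : j + k < n + k), L ⟨j, by omega⟩ ⟨j + k, h⟩ ≠ 0)
    (hRHess : IsKUpperHessenberg k R)
    (hAhat : Ahat = L * (1 + (Matrix.of fun (i : Fin (n + k)) (j : Fin k) =>
      if (i : ℕ) = (j : ℕ) then (1 : ℂ) else 0) * Zᴴ) * R)
    (hlast : ∀ (i j : Fin (n + k)), n ≤ (i : ℕ) → Ahat i j = 0) :
    ∀ i j : Fin (n + k), (j : ℕ) < (i : ℕ) → Ahat i j = 0 := by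
  set E : Matrix (Fin (n + k)) (Fin k) ℂ :=
    Matrix.of fun i j => if (i : ℕ) = (j : ℕ) then 1 else 0
  have hE : ∀ i : Fin (n + k), k ≤ (i : ℕ) → E i = 0 := fun i hi => by
    ext j
    simp [E, show (i : ℕ) ≠ j by omega]
  have hLAhat : Lᴴ * Ahat = R + E * (Zᴴ * R) := by
    rw [hAhat, mul_assoc, ← mul_assoc Lᴴ, ← star_eq_conjTranspose, Unitary.star_mul_self_of_mem hL,
      one_mul, add_mul, one_mul, Matrix.mul_assoc]
  have hLproper' : ∀ i p : Fin (n + k), (p : ℕ) = i + k → L i p ≠ 0 := by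
    rintro i ⟨p, hp⟩ rfl
    exact hLproper i hp
  refine upperTriangular_of_isKUpperHessenberg_conjTranspose_mul hLHess hLproper' ?_
    fun i j hi => hlast i j (by omega)
  rw [hLAhat]
  exact hRHess.add (isKUpperHessenberg_mul_of_row_eq_zero _ hE)
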